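/- arXiv:1405.4047 — 2 statements merged into one kernel-verified Lean document; each statement's English description precedes it below -/
import Mathlib

section
/- Minimum margin resolution bound (Theorem 3): Let ρ ∈ ℝ^P with ρ ≠ 0, let X_max = max_{1≤i≤N} ‖x_i‖₂, and let γ_min = min_{1≤i≤N} |⟨ρ, x_i⟩| / ‖ρ‖₂; assume γ_min > 0. If Λ is a positive integer with Λ > X_max·√P / (2·γ_min), then there exists λ ∈ ℤ^P with |λ_j| ≤ Λ for all j = 1,…,P such that Σ_{i=1}^{N} 1[y_i·⟨λ, x_i⟩ ≤ 0] ≤ Σ_{i=1}^{N} 1[y_i·⟨ρ, x_i⟩ ≤ 0]. -/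
/-!
Scale `ρ` to `t = (Λ / ‖ρ‖) • ρ`, whose coordinates lie in `[-Λ, Λ]`, and round each coordinate
to the nearest integer. The rounding error `e` has `‖e‖ ≤ √P / 2`, so `|⟨e, xᵢ⟩| ≤ X_max √P / 2`,
which is smaller than `Λ γ_min ≤ |⟨t, xᵢ⟩|`. Hence the rounded vector classifies every `xᵢ` with
the same sign as `ρ` does, and the two 0–1 losses coincide.
-/

lemma mul_pos_of_abs_sub_lt_abs {a b : ℝ} (h : |b - a| < |a|) : 0 < a * b := by
  nlinarith [sq_lt_sq.mpr h, sq_nonneg b]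

lemma mul_nonpos_iff_of_mul_pos {a b : ℝ} (y : ℝ) (hab : 0 < a * b) :
    y * b ≤ 0 ↔ y * a ≤ 0 := by
  constructor <;> intro h <;> by_contra! h' <;> nlinarith [sq_nonneg a, sq_nonneg b]

lemma abs_round_le_of_abs_le {α : Type*} [Field α] [LinearOrder α] [IsStrictOrderedRing α]
    [FloorRing α] {t : α} {n : ℤ} (h : |t| ≤ n) : |round t| ≤ n := by
  have hmono : Monotone (round : α → ℤ) := fun a b hab => by
    simpa only [round_eq] using Int.floor_mono (add_le_add_left hab _)
  rw [abs_le] at h ⊢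
  constructor
  · simpa only [← Int.cast_neg, round_intCast] using hmono h.1
  · simpa only [round_intCast] using hmono h.2

namespace EuclideanSpace

variable {ι : Type*} [Fintype ι]

lemma abs_apply_le_norm (v : EuclideanSpace ℝ ι) (j : ι) : |v j| ≤ ‖v‖ :=
  Real.norm_eq_abs (v j) ▸ PiLp.norm_apply_le v j

lemma norm_le_sqrt_card_mul {v : EuclideanSpace ℝ ι} {c : ℝ} (hc : 0 ≤ c)
    (hv : ∀ j, |v j| ≤ c) : ‖v‖ ≤ √(Fintype.card ι) * c := by
  have hsum : ∑ j, ‖v j‖ ^ 2 ≤ Fintype.card ι * c ^ 2 := by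
    calc ∑ j, ‖v j‖ ^ 2 ≤ ∑ _j : ι, c ^ 2 :=
          Finset.sum_le_sum fun j _ => pow_le_pow_left₀ (norm_nonneg _) (hv j) 2
      _ = Fintype.card ι * c ^ 2 := by simp
  rw [EuclideanSpace.norm_eq, ← Real.sqrt_sq hc, ← Real.sqrt_mul (Nat.cast_nonneg _)]
  exact Real.sqrt_le_sqrt hsum

end EuclideanSpace

section ScaledRound

variable {ι : Type*} [Fintype ι]

noncomputable def scaledRound (Λ : ℤ) (ρ : EuclideanSpace ℝ ι) : ι → ℤ :=
  fun j => round (Λ / ‖ρ‖ * ρ j)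

lemma abs_scaledRound_le (Λ : ℤ) (ρ : EuclideanSpace ℝ ι) (j : ι) :
    |scaledRound Λ ρ j| ≤ |Λ| := by
  refine abs_round_le_of_abs_le ?_
  rw [abs_mul, abs_div, abs_norm, div_mul_eq_mul_div, mul_div_assoc, Int.cast_abs]
  exact mul_le_of_le_one_right (abs_nonneg _)
    (div_le_one_of_le₀ (EuclideanSpace.abs_apply_le_norm ρ j) (norm_nonneg ρ))

lemma norm_toLp_scaledRound_sub_le (Λ : ℤ) (ρ : EuclideanSpace ℝ ι) :
    ‖WithLp.toLp 2 (fun j => (scaledRound Λ ρ j : ℝ)) - (Λ / ‖ρ‖ : ℝ) • ρ‖ ≤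
      √(Fintype.card ι) / 2 := by
  refine (EuclideanSpace.norm_le_sqrt_card_mul (c := 1 / 2) (by norm_num) fun j => ?_).trans_eq
    (by ring)
  simpa [abs_sub_comm, scaledRound] using abs_sub_round (Λ / ‖ρ‖ * ρ j)

lemma inner_mul_inner_scaledRound_pos {ρ x : EuclideanSpace ℝ ι} {X γ : ℝ} {Λ : ℤ}
    (hx : ‖x‖ ≤ X) (hγ : γ ≤ |inner ℝ ρ x| / ‖ρ‖) (hγpos : 0 < γ)
    (hΛ : X * √(Fintype.card ι) / (2 * γ) < Λ) :
    0 < inner ℝ ρ x * inner ℝ (WithLp.toLp 2 (fun j => (scaledRound Λ ρ j : ℝ))) x := by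
  set t : EuclideanSpace ℝ ι := (Λ / ‖ρ‖ : ℝ) • ρ
  set l : EuclideanSpace ℝ ι := WithLp.toLp 2 (fun j => (scaledRound Λ ρ j : ℝ))
  have hΛpos : (0 : ℝ) < Λ := lt_of_le_of_lt (by have := (norm_nonneg x).trans hx; positivity) hΛ
  have hmargin : Λ * γ ≤ |inner ℝ t x| := by
    rw [real_inner_smul_left, abs_mul, abs_div, abs_of_pos hΛpos, abs_norm,
      show Λ / ‖ρ‖ * |inner ℝ ρ x| = Λ * (|inner ℝ ρ x| / ‖ρ‖) by ring]
    exact mul_le_mul_of_nonneg_left hγ hΛpos.le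
  have herror : |inner ℝ (l - t) x| < Λ * γ := by
    rw [div_lt_iff₀ (by positivity)] at hΛ
    calc |inner ℝ (l - t) x| ≤ ‖l - t‖ * ‖x‖ := abs_real_inner_le_norm _ _
      _ ≤ √(Fintype.card ι) / 2 * X :=
        mul_le_mul (norm_toLp_scaledRound_sub_le Λ ρ) hx (norm_nonneg _) (by positivity)
      _ < Λ * γ := by linarith
  have hsign := mul_pos_of_abs_sub_lt_abs (a := inner ℝ t x) (b := inner ℝ l x)
    (by rw [← inner_sub_left]; linarith)
  rw [real_inner_smul_left, mul_assoc] at hsign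
  exact pos_of_mul_pos_right hsign (by positivity)

end ScaledRound

theorem min_margin_resolution_bound_general {P N : ℕ}
    (x : Fin N → EuclideanSpace ℝ (Fin P)) (y : Fin N → ℝ)
    (ρ : EuclideanSpace ℝ (Fin P))
    (Xmax γmin : ℝ)
    (hXmax : ∀ i, ‖x i‖ ≤ Xmax)
    (hγmin : ∀ i, γmin ≤ |(inner ℝ ρ (x i) : ℝ)| / ‖ρ‖)
    (hγpos : 0 < γmin)
    (Λ : ℕ)
    (hΛ : (Λ : ℝ) > Xmax * Real.sqrt P / (2 * γmin)) :
    ∃ l : Fin P → ℤ, (∀ j, |l j| ≤ (Λ : ℤ)) ∧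
      ∑ i : Fin N,
          (if y i * (inner ℝ ((WithLp.equiv 2 (Fin P → ℝ)).symm (fun j => (l j : ℝ))) (x i) : ℝ) ≤ 0
            then (1 : ℝ) else 0) ≤
        ∑ i : Fin N, (if y i * (inner ℝ ρ (x i) : ℝ) ≤ 0 then (1 : ℝ) else 0) := by
  refine ⟨scaledRound Λ ρ, fun j => by simpa using abs_scaledRound_le Λ ρ j,
    (Finset.sum_congr rfl fun i _ => ?_).le⟩
  have hsign := inner_mul_inner_scaledRound_pos (Λ := Λ) (hXmax i) (hγmin i) hγpos
    (by simpa using hΛ)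
  exact if_congr (mul_nonpos_iff_of_mul_pos (y i) hsign) rfl rfl

/-- **Minimum margin resolution bound** (Theorem 3). If the integer resolution `Λ` exceeds
`X_max √P / (2 γ_min)`, then some integer coefficient vector bounded by `Λ` attains a 0–1 loss
no worse than that of `ρ`. -/
theorem min_margin_resolution_bound {P N : ℕ}
    (x : Fin N → EuclideanSpace ℝ (Fin P)) (y : Fin N → ℝ)
    (hy : ∀ i, y i = 1 ∨ y i = -1)
    (ρ : EuclideanSpace ℝ (Fin P)) (hρ : ρ ≠ 0)
    (Xmax γmin : ℝ)
    (hXmax : ∀ i, ‖x i‖ ≤ Xmax)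
    (hγmin : ∀ i, γmin ≤ |(inner ℝ ρ (x i) : ℝ)| / ‖ρ‖)
    (hγpos : 0 < γmin)
    (Λ : ℕ) (hΛpos : 0 < Λ)
    (hΛ : (Λ : ℝ) > Xmax * Real.sqrt P / (2 * γmin)) :
    ∃ l : Fin P → ℤ, (∀ j, |l j| ≤ (Λ : ℤ)) ∧
      ∑ i : Fin N,
          (if y i * (inner ℝ ((WithLp.equiv 2 (Fin P → ℝ)).symm (fun j => (l j : ℝ))) (x i) : ℝ) ≤ 0
            then (1 : ℝ) else 0) ≤
        ∑ i : Fin N, (if y i * (inner ℝ ρ (x i) : ℝ) ≤ 0 then (1 : ℝ) else 0) :=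
  min_margin_resolution_bound_general x y ρ Xmax γmin hXmax hγmin hγpos Λ hΛ
end

section
/- Guaranteeing perfect accuracy on the negative class via the weight W⁺ (claim of Section 2.6): Let I⁺ and I⁻ partition {1,…,N} with N⁺ = |I⁺| and N⁻ = |I⁻|, let e_i(λ) = 1[y_i·⟨λ, x_i⟩ ≤ 0], and for 0 < W⁺ < 1 with W⁻ = 1 − W⁺ define the weighted loss Z(λ) = (1/N)·( W⁺·Σ_{i∈I⁺} e_i(λ) + W⁻·Σ_{i∈I⁻} e_i(λ) ). Let L ⊆ ℝ^P and suppose there exists λ₀ ∈ L with e_i(λ₀) = 0 for all i ∈ I⁻. If W⁺ < 1/(1 + N⁺), then every minimizer λ* of Z over L satisfies e_i(λ*) = 0 for all i ∈ I⁻, i.e., it classifies all negatively-labeled examples correctly. -/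
/-!
Counting only the negative class, a classifier `λ₀` with no negative errors has weighted loss at
most `W⁺ N⁺ / N`, while a single negative error already costs `W⁻ / N = (1 - W⁺) / N`. The
condition `W⁺ < 1 / (1 + N⁺)` says exactly `W⁺ N⁺ < 1 - W⁺`, so a minimizer cannot afford any
negative error.
-/

open Finset

def weightedErrorSum {ι : Type*} (w : ℝ) (A B : Finset ι) (f : ι → ℝ) : ℝ :=
  w * ∑ i ∈ A, f i + (1 - w) * ∑ i ∈ B, f i

section WeightedErrorSum

variable {ι : Type*} {w : ℝ} {A B : Finset ι} {f g : ι → ℝ}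

theorem weightedErrorSum_le_of_eq_zero_on (hw : 0 ≤ w) (hgA : ∀ i ∈ A, g i ≤ 1)
    (hgB : ∀ i ∈ B, g i = 0) : weightedErrorSum w A B g ≤ w * #A := by
  have hA : ∑ i ∈ A, g i ≤ #A := by
    simpa using Finset.sum_le_sum hgA
  rw [weightedErrorSum, Finset.sum_eq_zero hgB, mul_zero, add_zero]
  exact mul_le_mul_of_nonneg_left hA hw

theorem one_sub_le_weightedErrorSum (hw0 : 0 ≤ w) (hw1 : w ≤ 1) (hf : ∀ i, 0 ≤ f i)
    {i : ι} (hi : i ∈ B) (hfi : 1 ≤ f i) : 1 - w ≤ weightedErrorSum w A B f := by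
  have hA : 0 ≤ ∑ j ∈ A, f j := Finset.sum_nonneg fun j _ => hf j
  have hB : 1 ≤ ∑ j ∈ B, f j := hfi.trans (Finset.single_le_sum (fun j _ => hf j) hi)
  rw [weightedErrorSum]
  nlinarith [mul_nonneg hw0 hA, mul_le_mul_of_nonneg_left hB (sub_nonneg.mpr hw1)]

theorem eq_zero_on_of_weightedErrorSum_le (hw0 : 0 ≤ w) (hw : w * (1 + #A) < 1)
    (hf : ∀ i, f i = 0 ∨ f i = 1) (hgA : ∀ i ∈ A, g i ≤ 1) (hgB : ∀ i ∈ B, g i = 0)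
    (hfg : weightedErrorSum w A B f ≤ weightedErrorSum w A B g) :
    ∀ i ∈ B, f i = 0 := by
  intro i hi
  refine (hf i).resolve_right fun hfi => ?_
  have hw1 : w ≤ 1 := by nlinarith [(#A).cast_nonneg (α := ℝ)]
  have hf0 : ∀ j, 0 ≤ f j := fun j => by rcases hf j with h | h <;> simp [h]
  have := (one_sub_le_weightedErrorSum (A := A) hw0 hw1 hf0 hi hfi.ge).trans
    (hfg.trans (weightedErrorSum_le_of_eq_zero_on hw0 hgA hgB))
  linarith

end WeightedErrorSum

theorem weighted_loss_perfect_negative_class_general {P N : ℕ}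
    (x : Fin N → EuclideanSpace ℝ (Fin P)) (y : Fin N → ℝ)
    (Ip Im : Finset (Fin N))
    (e : EuclideanSpace ℝ (Fin P) → Fin N → ℝ)
    (he : ∀ v i, e v i = if y i * (inner ℝ v (x i) : ℝ) ≤ 0 then (1 : ℝ) else 0)
    (Wp : ℝ) (hWp0 : 0 < Wp)
    (Z : EuclideanSpace ℝ (Fin P) → ℝ)
    (hZ : ∀ v, Z v = (1 / (N : ℝ)) *
      (Wp * ∑ i ∈ Ip, e v i + (1 - Wp) * ∑ i ∈ Im, e v i))
    (L : Set (EuclideanSpace ℝ (Fin P)))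
    (l0 : EuclideanSpace ℝ (Fin P)) (hl0 : l0 ∈ L)
    (hl0neg : ∀ i ∈ Im, e l0 i = 0)
    (hW : Wp < 1 / (1 + (Ip.card : ℝ)))
    (lstar : EuclideanSpace ℝ (Fin P))
    (hmin : ∀ v ∈ L, Z lstar ≤ Z v) :
    ∀ i ∈ Im, e lstar i = 0 := by
  intro i hi
  have he01 : ∀ v j, e v j = 0 ∨ e v j = 1 := fun v j => by
    rw [he]; split_ifs <;> simp
  have hN : (0 : ℝ) < 1 / N := one_div_pos.mpr (by exact_mod_cast i.pos)
  have hloss : weightedErrorSum Wp Ip Im (e lstar) ≤ weightedErrorSum Wp Ip Im (e l0) := by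
    have := hmin l0 hl0
    rw [hZ, hZ] at this
    exact le_of_mul_le_mul_left this hN
  have hW' : Wp * (1 + #Ip) < 1 := (lt_div_iff₀ (by positivity)).mp hW
  refine eq_zero_on_of_weightedErrorSum_le hWp0.le hW' (he01 lstar)
    (fun j _ => ?_) hl0neg hloss i hi
  rcases he01 l0 j with h | h <;> simp [h]

/-- **Guaranteeing perfect accuracy on the negative class via the weight W⁺**
(claim of Section 2.6). If `W⁺ < 1/(1+N⁺)` and some feasible classifier makes no errors on
the negative class, then every minimizer of the weighted 0–1 loss makes no errors on the
negative class. -/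
theorem weighted_loss_perfect_negative_class {P N : ℕ}
    (x : Fin N → EuclideanSpace ℝ (Fin P)) (y : Fin N → ℝ)
    (hy : ∀ i, y i = 1 ∨ y i = -1)
    (Ip Im : Finset (Fin N))
    (hIp : Ip = Finset.univ.filter (fun i => y i = 1))
    (hIm : Im = Finset.univ.filter (fun i => y i = -1))
    (e : EuclideanSpace ℝ (Fin P) → Fin N → ℝ)
    (he : ∀ v i, e v i = if y i * (inner ℝ v (x i) : ℝ) ≤ 0 then (1 : ℝ) else 0)
    (Wp : ℝ) (hWp0 : 0 < Wp) (hWp1 : Wp < 1)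
    (Z : EuclideanSpace ℝ (Fin P) → ℝ)
    (hZ : ∀ v, Z v = (1 / (N : ℝ)) *
      (Wp * ∑ i ∈ Ip, e v i + (1 - Wp) * ∑ i ∈ Im, e v i))
    (L : Set (EuclideanSpace ℝ (Fin P)))
    (l0 : EuclideanSpace ℝ (Fin P)) (hl0 : l0 ∈ L)
    (hl0neg : ∀ i ∈ Im, e l0 i = 0)
    (hW : Wp < 1 / (1 + (Ip.card : ℝ)))
    (lstar : EuclideanSpace ℝ (Fin P)) (hmem : lstar ∈ L)
    (hmin : ∀ v ∈ L, Z lstar ≤ Z v) :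
    ∀ i ∈ Im, e lstar i = 0 :=
  weighted_loss_perfect_negative_class_general x y Ip Im e he Wp hWp0 Z hZ L l0 hl0 hl0neg hW lstar
    hmin
end
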